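/- The composite functor Dtry = Option ∘ Dtry≠∅ carries a monad structure, with unit x ↦ some (Pure x) and multiplication induced by the distributive law distrib : Dtry≠∅ ∘ Option → Option ∘ Dtry≠∅ together with the monad structures of Option and Dtry≠∅; this structure satisfies the monad laws. -/

import Mathlib

/-! Beck's construction: `Option ∘ Dtry≠∅` is a monad because `distrib` is natural and compatible
with both units and both multiplications. Each compatibility law is proved by induction on trees,
and at a node all of them reduce to one property of `filterNothings`: filtering the children and
then binding with a map `ρ` that itself filters at nodes is the same as binding every child with
`ρ` and filtering afterwards, since both drop exactly the keys whose child ends up `none`. -/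

/- Nonempty finite maps from strings to `b` are modeled as a nonempty finite key set
`s : Finset String` together with a value function `(k : String) → k ∈ s → b`. -/

/-- `DtryNE a = Free Record≠∅ a`: the free monad on nonempty finite string maps. -/
inductive DtryNE (a : Type) : Type
  | pure : a → DtryNE a
  | join : (s : Finset String) → s.Nonempty → ((k : String) → k ∈ s → DtryNE a) → DtryNE a

namespace DtryNE

variable {a b : Type}

def map (g : a → b) : DtryNE a → DtryNE b
  | .pure x => .pure (g x)
  | .join s hs f => .join s hs fun k h => (f k h).map g

def mu : DtryNE (DtryNE a) → DtryNE a
  | .pure x => x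
  | .join s hs f => .join s hs fun k h => (f k h).mu

attribute [local instance] Classical.propDecidable

/-- `distrib`: recursively filter out `none` leaves, returning `none` if everything
is filtered away.  At a node, `filterNothings` keeps exactly the keys whose subtree
survives, and fails if no key survives. -/
noncomputable def distrib : DtryNE (Option a) → Option (DtryNE a)
  | .pure mx => mx.map .pure
  | .join s _ f =>
      let g : (k : String) → k ∈ s → Option (DtryNE a) := fun k h => distrib (f k h)
      let s' : Finset String := s.filter (fun k => ∃ h : k ∈ s, (g k h).isSome)
      if h' : s'.Nonempty then
        some (.join s' h' (fun k hk => (g k (by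
            have := (Finset.mem_filter.mp hk).1; exact this)).get (by
            have := (Finset.mem_filter.mp hk).2; exact this.choose_spec)))
      else none

end DtryNE

/-- The directory monad: `Dtry = Option ∘ Dtry≠∅`. -/
def Dtry (a : Type) : Type := Option (DtryNE a)

namespace Dtry

variable {a b : Type}

def map (g : a → b) : Dtry a → Dtry b := Option.map (DtryNE.map g)

def pure (x : a) : Dtry a := some (DtryNE.pure x)

/-- Multiplication, induced by the distributive law `distrib` together with the
monad structures of `Option` and `Dtry≠∅`. -/
noncomputable def mu (d : Dtry (Dtry a)) : Dtry a :=
  Option.map DtryNE.mu (Option.join (Option.map DtryNE.distrib d))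

end Dtry

namespace DtryNE

-- The instances `distrib` was defined with, so that `distrib_join` holds by `rfl`.
attribute [local instance] Classical.propDecidable

variable {a b c : Type}

theorem join_congr {s₁ s₂ : Finset String} {h₁ : s₁.Nonempty} {h₂ : s₂.Nonempty}
    {F₁ : (k : String) → k ∈ s₁ → DtryNE a} {F₂ : (k : String) → k ∈ s₂ → DtryNE a}
    (hs : s₁ = s₂) (hF : ∀ k (hk₁ : k ∈ s₁) (hk₂ : k ∈ s₂), F₁ k hk₁ = F₂ k hk₂) :
    join s₁ h₁ F₁ = join s₂ h₂ F₂ := by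
  subst hs
  obtain rfl : F₁ = F₂ := funext fun k => funext fun hk => hF k hk hk
  rfl

theorem map_map (g : a → b) (h : b → c) (t : DtryNE a) :
    (t.map g).map h = t.map (h ∘ g) := by
  induction t with
  | pure x => rfl
  | join s hs f ih => exact join_congr rfl fun k hk _ => ih k hk

theorem mu_map_pure (t : DtryNE a) : (t.map pure).mu = t := by
  induction t with
  | pure x => rfl
  | join s hs f ih => exact join_congr rfl fun k hk _ => ih k hk

theorem mu_mu (t : DtryNE (DtryNE (DtryNE a))) : t.mu.mu = (t.map mu).mu := by
  induction t with
  | pure x => rfl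
  | join s hs f ih => exact join_congr rfl fun k hk _ => ih k hk

noncomputable def joinOpt (s : Finset String) (F : (k : String) → k ∈ s → DtryNE a) :
    Option (DtryNE a) :=
  if h : s.Nonempty then some (join s h F) else none

theorem joinOpt_congr {s₁ s₂ : Finset String}
    {F₁ : (k : String) → k ∈ s₁ → DtryNE a} {F₂ : (k : String) → k ∈ s₂ → DtryNE a}
    (hs : s₁ = s₂) (hF : ∀ k (hk₁ : k ∈ s₁) (hk₂ : k ∈ s₂), F₁ k hk₁ = F₂ k hk₂) :
    joinOpt s₁ F₁ = joinOpt s₂ F₂ := by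
  subst hs
  obtain rfl : F₁ = F₂ := funext fun k => funext fun hk => hF k hk hk
  rfl

noncomputable def filterNothings (s : Finset String)
    (g : (k : String) → k ∈ s → Option (DtryNE a)) : Option (DtryNE a) :=
  joinOpt (s.filter fun k => ∃ h : k ∈ s, (g k h).isSome) fun k hk =>
    (g k (Finset.mem_filter.mp hk).1).get (Finset.mem_filter.mp hk).2.choose_spec

theorem distrib_join (s : Finset String) (hs : s.Nonempty)
    (f : (k : String) → k ∈ s → DtryNE (Option a)) :
    distrib (join s hs f) = filterNothings s fun k hk => distrib (f k hk) := rfl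

theorem filterNothings_some {s : Finset String} (hs : s.Nonempty)
    (F : (k : String) → k ∈ s → DtryNE a) :
    filterNothings s (fun k hk => some (F k hk)) = some (join s hs F) := by
  have hfilter : (s.filter fun k => ∃ h : k ∈ s, (some (F k h)).isSome) = s :=
    Finset.filter_true_of_mem fun k hk => ⟨hk, rfl⟩
  exact (joinOpt_congr hfilter (F₂ := F) fun _ _ _ => rfl).trans (dif_pos hs)

theorem filterNothings_eq_none {s : Finset String} {g : (k : String) → k ∈ s → Option (DtryNE a)}
    (hg : ∀ k hk, g k hk = none) : filterNothings s g = none :=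
  dif_neg fun ⟨k, hk⟩ => by simp [hg] at hk

theorem filterNothings_eq_of_subset {s t : Finset String}
    {g : (k : String) → k ∈ s → Option (DtryNE a)} {g' : (k : String) → k ∈ t → Option (DtryNE a)}
    (hts : t ⊆ s) (hg : ∀ k (hk : k ∈ s), k ∉ t → g k hk = none)
    (hg' : ∀ k (hk : k ∈ t), g' k hk = g k (hts hk)) :
    filterNothings s g = filterNothings t g' := by
  refine joinOpt_congr ?_ fun k hk₁ hk₂ => ?_
  · ext k
    simp only [Finset.mem_filter]
    constructor
    · rintro ⟨hks, _, hsome⟩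
      by_cases hkt : k ∈ t
      · exact ⟨hkt, hkt, hg' k hkt ▸ hsome⟩
      · simp [hg k hks hkt] at hsome
    · rintro ⟨hkt, _, hsome⟩
      exact ⟨hts hkt, hts hkt, hg' k hkt ▸ hsome⟩
  · simp only [hg']

theorem filterNothings_bind {s : Finset String} (g : (k : String) → k ∈ s → Option (DtryNE a))
    {ρ : DtryNE a → Option (DtryNE b)}
    (hρ : ∀ t ht (F : (k : String) → k ∈ t → DtryNE a),
      ρ (join t ht F) = filterNothings t fun k hk => ρ (F k hk)) :
    filterNothings s (fun k hk => (g k hk).bind ρ) = (filterNothings s g).bind ρ := by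
  by_cases hsome : (s.filter fun k => ∃ h : k ∈ s, (g k h).isSome).Nonempty
  · have hfiltered : filterNothings s g = some (join _ hsome _) := dif_pos hsome
    rw [hfiltered, Option.bind_some, hρ]
    refine filterNothings_eq_of_subset (Finset.filter_subset _ _) (fun k hk hkt => ?_)
      fun k hk => ?_
    · have hgk : g k hk = none := by
        simpa [hk] using hkt
      rw [hgk, Option.bind_none]
    · obtain ⟨x, hx⟩ := Option.isSome_iff_exists.mp (Finset.mem_filter.mp hk).2.choose_spec
      simp [hx]
  · have hnone : ∀ k hk, g k hk = none := fun k hk => by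
      by_contra hne
      exact hsome ⟨k, Finset.mem_filter.mpr ⟨hk, hk, Option.isSome_iff_ne_none.mpr hne⟩⟩
    rw [filterNothings_eq_none hnone, Option.bind_none]
    exact filterNothings_eq_none fun k hk => by rw [hnone]; rfl

theorem filterNothings_map {s : Finset String} (g : (k : String) → k ∈ s → Option (DtryNE a))
    {ψ : DtryNE a → DtryNE b}
    (hψ : ∀ t ht (F : (k : String) → k ∈ t → DtryNE a),
      ψ (join t ht F) = join t ht fun k hk => ψ (F k hk)) :
    filterNothings s (fun k hk => (g k hk).map ψ) = (filterNothings s g).map ψ := by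
  simp only [Option.map_eq_bind]
  exact filterNothings_bind g fun t ht F => by
    simp only [Function.comp_apply, hψ, filterNothings_some ht]

theorem distrib_map_some (t : DtryNE a) : distrib (t.map some) = some t := by
  induction t with
  | pure x => rfl
  | join s hs f ih =>
    rw [map, distrib_join]
    simp only [ih]
    exact filterNothings_some hs f

theorem distrib_map_map (g : a → b) (t : DtryNE (Option a)) :
    distrib (t.map (Option.map g)) = (distrib t).map (map g) := by
  induction t with
  | pure mx => cases mx <;> rfl
  | join s hs f ih =>
    rw [map, distrib_join, distrib_join]
    simp only [ih]
    exact filterNothings_map _ fun _ _ _ => rfl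

theorem distrib_map_join (t : DtryNE (Option (Option a))) :
    distrib (t.map Option.join) = (distrib t).bind distrib := by
  induction t with
  | pure mx => cases mx <;> rfl
  | join s hs f ih =>
    rw [map, distrib_join, distrib_join]
    simp only [ih]
    exact filterNothings_bind _ distrib_join

theorem distrib_mu (t : DtryNE (DtryNE (Option a))) :
    distrib t.mu = (distrib (t.map distrib)).map mu := by
  induction t with
  | pure u =>
    change distrib u = ((distrib u).map pure).map mu
    cases distrib u <;> rfl
  | join s hs f ih =>
    rw [mu, map, distrib_join, distrib_join]
    simp only [ih]
    exact filterNothings_map _ fun _ _ _ => rfl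

theorem mu_bind_distrib_assoc (t : DtryNE (Option (DtryNE (Option (DtryNE a))))) :
    (((distrib t).map mu).bind distrib).map mu =
      (distrib (t.map fun d => (d.bind distrib).map mu)).map mu := by
  have hcomp : (fun d : Option (DtryNE (Option (DtryNE a))) => (d.bind distrib).map mu) =
      Option.map mu ∘ Option.join ∘ Option.map distrib := by
    funext d; cases d <;> rfl
  rw [hcomp, ← map_map, ← map_map, distrib_map_map, distrib_map_join, distrib_map_map]
  simp only [Option.bind_map, Option.map_bind]
  congr 1
  funext v
  simp only [Function.comp_apply, distrib_mu, Option.map_map]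
  congr 1
  exact funext mu_mu

end DtryNE

namespace Dtry

variable {a : Type}

theorem mu_eq_map_bind (d : Dtry (Dtry a)) :
    d.mu = (Option.bind d DtryNE.distrib).map DtryNE.mu := by
  cases d <;> rfl

theorem mu_pure (d : Dtry a) : (pure d).mu = d := by
  cases d <;> rfl

theorem mu_map_pure (d : Dtry a) : (d.map pure).mu = d := by
  cases d with
  | none => rfl
  | some t =>
    change Option.map DtryNE.mu (DtryNE.distrib (t.map (some ∘ DtryNE.pure))) = some t
    rw [← DtryNE.map_map, DtryNE.distrib_map_some, Option.map_some, DtryNE.mu_map_pure]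

theorem mu_mu (d : Dtry (Dtry (Dtry a))) : d.mu.mu = (d.map mu).mu := by
  cases d with
  | none => rfl
  | some t =>
    rw [mu_eq_map_bind, mu_eq_map_bind, funext (mu_eq_map_bind (a := a))]
    exact DtryNE.mu_bind_distrib_assoc t

end Dtry

/-- the composite `Dtry = Option ∘ Dtry≠∅`, with unit `x ↦ some (Pure x)`
and multiplication induced by the distributive law, satisfies the monad laws. -/
theorem dtry_is_monad {a : Type} :
    (∀ d : Dtry a, Dtry.mu (Dtry.pure d) = d) ∧
    (∀ d : Dtry a, Dtry.mu (d.map Dtry.pure) = d) ∧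
    (∀ d : Dtry (Dtry (Dtry a)), d.mu.mu = (d.map Dtry.mu).mu) :=
  ⟨Dtry.mu_pure, Dtry.mu_map_pure, Dtry.mu_mu⟩
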